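/- arXiv:2401.11299 — 3 statements merged into one kernel-verified Lean document; each statement's English description precedes it below -/
import Mathlib

section
/- For every nonzero multivector M ∈ ⋀X, the inner space of M is contained in the outer space of M: isp(M) ⊆ osp(M). -/
/-!
Setup: `X` is a finite-dimensional real inner product space, `⋀X` its exterior
algebra.  We hypothesize a bilinear form `innE` on the exterior algebra which makes
the wedges of any orthonormal basis of `X` (over increasing index sets) orthonormal
— this characterizes the inner product of the paper — and a bilinear left
contraction `lcontr` adjoint to the wedge product: `⟨M⌟N, L⟩ = ⟨N, M∧L⟩`.
-/

noncomputable section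

open ExteriorAlgebra

/-- The wedge product `v_{i₁} ∧ ⋯ ∧ v_{i_p}` of the vectors `v i`, `i ∈ s`,
taken in increasing order of the indices. -/
def wedgeOf {X : Type*} [AddCommGroup X] [Module ℝ X] {n : ℕ}
    (v : Fin n → X) (s : Finset (Fin n)) : ExteriorAlgebra ℝ X :=
  ((s.sort (· ≤ ·)).map fun i => ι ℝ (v i)).prod

/-- The inner space `isp M = {v : v ∧ M = 0}`. -/
def isp {X : Type*} [AddCommGroup X] [Module ℝ X]
    (M : ExteriorAlgebra ℝ X) : Submodule ℝ X where
  carrier := {x | ι ℝ x * M = 0}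
  add_mem' := by
    intro a b ha hb
    simp only [Set.mem_setOf_eq, map_add, add_mul] at *
    rw [ha, hb, add_zero]
  zero_mem' := by simp
  smul_mem' := by
    intro c x hx
    simp only [Set.mem_setOf_eq, map_smul, smul_mul_assoc] at *
    rw [hx, smul_zero]

/-- The space `{v : v ⌟ M = 0}`, whose orthogonal complement is the outer space. -/
def ospKer {X : Type*} [NormedAddCommGroup X] [InnerProductSpace ℝ X]
    (lcontr : ExteriorAlgebra ℝ X →ₗ[ℝ] ExteriorAlgebra ℝ X →ₗ[ℝ] ExteriorAlgebra ℝ X)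
    (M : ExteriorAlgebra ℝ X) : Submodule ℝ X where
  carrier := {x | lcontr (ι ℝ x) M = 0}
  add_mem' := by
    intro a b ha hb
    simp only [Set.mem_setOf_eq, map_add, LinearMap.add_apply] at *
    rw [ha, hb, add_zero]
  zero_mem' := by simp
  smul_mem' := by
    intro c x hx
    simp only [Set.mem_setOf_eq, map_smul, LinearMap.smul_apply] at *
    rw [hx, smul_zero]

/-- The outer space `osp M = {v : v ⌟ M = 0}ᗮ`. -/
def osp {X : Type*} [NormedAddCommGroup X] [InnerProductSpace ℝ X]
    (lcontr : ExteriorAlgebra ℝ X →ₗ[ℝ] ExteriorAlgebra ℝ X →ₗ[ℝ] ExteriorAlgebra ℝ X)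
    (M : ExteriorAlgebra ℝ X) : Submodule ℝ X :=
  (ospKer lcontr M)ᗮ

/-- `innE` is the inner product of `⋀X`: for every orthonormal basis of `X`, the
wedges of basis vectors over increasing index sets form an orthonormal family. -/
def InnerOK {X : Type*} [NormedAddCommGroup X] [InnerProductSpace ℝ X]
    (innE : ExteriorAlgebra ℝ X →ₗ[ℝ] ExteriorAlgebra ℝ X →ₗ[ℝ] ℝ) : Prop :=
  ∀ (m : ℕ) (w : OrthonormalBasis (Fin m) ℝ X) (s t : Finset (Fin m)),
    innE (wedgeOf (⇑w) s) (wedgeOf (⇑w) t) = if s = t then 1 else 0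

/-- `lcontr` is the left contraction: `⟨M ⌟ N, L⟩ = ⟨N, M ∧ L⟩`. -/
def ContrOK {X : Type*} [NormedAddCommGroup X] [InnerProductSpace ℝ X]
    (innE : ExteriorAlgebra ℝ X →ₗ[ℝ] ExteriorAlgebra ℝ X →ₗ[ℝ] ℝ)
    (lcontr : ExteriorAlgebra ℝ X →ₗ[ℝ] ExteriorAlgebra ℝ X →ₗ[ℝ] ExteriorAlgebra ℝ X) :
    Prop :=
  ∀ M N L : ExteriorAlgebra ℝ X, innE (lcontr M N) L = innE N (M * L)


/-!
Rescale `v ∈ isp M` to a member `w i` of an orthonormal basis and expand `M` in the orthonormal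
wedges `w_T`. Since `w i ∧ w_T = ±w_{T ∪ {i}}` for `i ∉ T`, the equation `v ∧ M = 0` kills every
coefficient `⟨M, w_T⟩` with `i ∉ T`. For `i ∈ T`, adjointness gives
`0 = ⟨u ⌟ M, w_{T∖i}⟩ = ⟨M, u ∧ w_{T∖i}⟩ = ±⟨w i, u⟩⟨M, w_T⟩`, because the components of `u`
along the other `w j` only produce wedges missing `i`. Some coefficient of `M ≠ 0` is nonzero,
so `⟨w i, u⟩ = 0`.
-/

open ExteriorAlgebra

section WedgeBasis

variable {X : Type*} [AddCommGroup X] [Module ℝ X] {n : ℕ}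

theorem wedgeOf_empty (v : Fin n → X) : wedgeOf v ∅ = 1 := by
  simp [wedgeOf]

theorem wedgeOf_insert_of_lt (v : Fin n → X) {i : Fin n} {s : Finset (Fin n)}
    (hi : ∀ j ∈ s, i < j) : wedgeOf v (insert i s) = ι ℝ (v i) * wedgeOf v s := by
  rw [wedgeOf, Finset.sort_insert _ (fun j hj => (hi j hj).le) fun h => lt_irrefl i (hi i h),
    List.map_cons, List.prod_cons, wedgeOf]

theorem ι_mul_wedgeOf (v : Fin n → X) (i : Fin n) (s : Finset (Fin n)) :
    ι ℝ (v i) * wedgeOf v s =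
      if i ∈ s then 0 else (-1 : ℝ) ^ (s.filter (· < i)).card • wedgeOf v (insert i s) := by
  induction s using Finset.induction_on_min with
  | empty => simp [wedgeOf]
  | insert j s hj ih =>
    have hjs : j ∉ s := fun h => lt_irrefl j (hj j h)
    rw [wedgeOf_insert_of_lt v hj, ← mul_assoc]
    rcases lt_trichotomy i j with hij | rfl | hji
    · have hi : ∀ k ∈ insert j s, i < k := by
        simpa [hij] using fun k hk => hij.trans (hj k hk)
      have hfilter : (insert j s).filter (· < i) = ∅ :=
        Finset.filter_eq_empty_iff.2 fun k hk => not_lt.2 (hi k hk).le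
      rw [if_neg fun h => lt_irrefl i (hi i h), hfilter, Finset.card_empty, pow_zero, one_smul,
        wedgeOf_insert_of_lt v hi, wedgeOf_insert_of_lt v hj, mul_assoc]
    · simp
    · rw [eq_neg_of_add_eq_zero_left (ι_add_mul_swap (v i) (v j)), neg_mul, mul_assoc, ih]
      by_cases his : i ∈ s
      · simp [his]
      · have hj' : ∀ k ∈ insert i s, j < k := by simpa [hji] using hj
        have hjf : j ∉ s.filter (· < i) := fun h => hjs (Finset.mem_of_mem_filter j h)
        rw [if_neg his, if_neg (by simp [his, hji.ne']), mul_smul_comm,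
          ← wedgeOf_insert_of_lt v hj', Finset.insert_comm, Finset.filter_insert, if_pos hji,
          Finset.card_insert_of_notMem hjf, pow_succ, mul_neg_one, neg_smul]

theorem span_range_wedgeOf (b : Module.Basis (Fin n) ℝ X) :
    Submodule.span ℝ (Set.range (wedgeOf b)) = ⊤ := by
  set S := Submodule.span ℝ (Set.range (wedgeOf b))
  have hι : ∀ i, S ≤ S.comap (LinearMap.mulLeft ℝ (ι ℝ (b i))) := fun i =>
    Submodule.span_le.2 <| by
      rintro _ ⟨s, rfl⟩
      simp only [SetLike.mem_coe, Submodule.mem_comap, LinearMap.mulLeft_apply, ι_mul_wedgeOf]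
      split_ifs
      · exact S.zero_mem
      · exact S.smul_mem _ (Submodule.subset_span ⟨_, rfl⟩)
  refine Submodule.eq_top_iff'.2 fun M => ?_
  induction M using CliffordAlgebra.left_induction with
  | algebraMap r =>
    rw [Algebra.algebraMap_eq_smul_one, ← wedgeOf_empty b]
    exact S.smul_mem _ (Submodule.subset_span ⟨_, rfl⟩)
  | add x y hx hy => exact S.add_mem hx hy
  | ι_mul x m hx =>
    show ι ℝ m * x ∈ S
    rw [← b.sum_repr m, map_sum, Finset.sum_mul]
    refine S.sum_mem fun i _ => ?_
    rw [map_smul, smul_mul_assoc]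
    exact S.smul_mem _ (hι i hx)

end WedgeBasis

section OrthonormalWedges

variable {X : Type*} [AddCommGroup X] [Module ℝ X] {n : ℕ} (b : Module.Basis (Fin n) ℝ X)
  {B : LinearMap.BilinForm ℝ (ExteriorAlgebra ℝ X)}

theorem sum_bilin_wedgeOf_smul_wedgeOf
    (hB : ∀ s t, B (wedgeOf b s) (wedgeOf b t) = if s = t then 1 else 0)
    (M : ExteriorAlgebra ℝ X) : ∑ t, B M (wedgeOf b t) • wedgeOf b t = M := by
  have hM : M ∈ Submodule.span ℝ (Set.range (wedgeOf b)) := by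
    rw [span_range_wedgeOf]; trivial
  obtain ⟨a, rfl⟩ := (Submodule.mem_span_range_iff_exists_fun ℝ).1 hM
  simp [map_sum, hB]

theorem bilin_ι_mul_wedgeOf_insert
    (hB : ∀ s t, B (wedgeOf b s) (wedgeOf b t) = if s = t then 1 else 0) {i : Fin n}
    {t : Finset (Fin n)} (hit : i ∉ t) (N : ExteriorAlgebra ℝ X) :
    B (ι ℝ (b i) * N) (wedgeOf b (insert i t)) =
      (-1 : ℝ) ^ (t.filter (· < i)).card * B N (wedgeOf b t) := by
  have key : (B.flip (wedgeOf b (insert i t))).comp (LinearMap.mulLeft ℝ (ι ℝ (b i))) =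
      (-1 : ℝ) ^ (t.filter (· < i)).card • B.flip (wedgeOf b t) := by
    refine LinearMap.ext_on_range (span_range_wedgeOf b) fun s => ?_
    simp only [LinearMap.comp_apply, LinearMap.mulLeft_apply, LinearMap.BilinForm.flip_apply,
      LinearMap.smul_apply, smul_eq_mul, ι_mul_wedgeOf]
    by_cases his : i ∈ s
    · rw [if_pos his, hB, if_neg (by rintro rfl; exact hit his)]
      simp
    · obtain rfl | hst := eq_or_ne s t
      · simp [his, hB]
      · have hne : insert i s ≠ insert i t := fun h => hst <| by
          rw [← Finset.erase_insert his, h, Finset.erase_insert hit]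
        simp [his, hB, hst, hne]
  exact LinearMap.congr_fun key N

theorem basis_repr_eq_zero_of_ι_mul_eq_zero
    (hB : ∀ s t, B (wedgeOf b s) (wedgeOf b t) = if s = t then 1 else 0)
    {M : ExteriorAlgebra ℝ X} (hM : M ≠ 0) {i : Fin n} (hi : ι ℝ (b i) * M = 0) {u : X}
    (hu : ∀ L, B M (ι ℝ u * L) = 0) : b.repr u i = 0 := by
  have hsign (t : Finset (Fin n)) : (-1 : ℝ) ^ (t.filter (· < i)).card ≠ 0 := by simp
  have coeff_of_notMem (t) (hit : i ∉ t) : B M (wedgeOf b t) = 0 := by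
    have h := bilin_ι_mul_wedgeOf_insert b hB hit M
    rw [hi, map_zero, LinearMap.zero_apply, eq_comm] at h
    exact (mul_eq_zero.1 h).resolve_left (hsign t)
  have coeff_of_mem (t) (hit : i ∈ t) : b.repr u i * B M (wedgeOf b t) = 0 := by
    have h := hu (wedgeOf b (t.erase i))
    rw [← b.sum_repr u, map_sum, Finset.sum_mul, map_sum, Finset.sum_eq_single i] at h
    · rw [map_smul, smul_mul_assoc, map_smul, ι_mul_wedgeOf, if_neg (Finset.notMem_erase i t),
        Finset.insert_erase hit, map_smul, smul_eq_mul, smul_eq_mul, mul_left_comm] at h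
      exact (mul_eq_zero.1 h).resolve_left (hsign _)
    · intro j _ hji
      rw [map_smul, smul_mul_assoc, map_smul, ι_mul_wedgeOf]
      split_ifs
      · simp
      · rw [map_smul, coeff_of_notMem _ (by simp [Ne.symm hji]), smul_zero, smul_zero]
    · simp
  by_contra hu0
  refine hM ?_
  rw [← sum_bilin_wedgeOf_smul_wedgeOf b hB M]
  refine Finset.sum_eq_zero fun t _ => ?_
  by_cases hit : i ∈ t
  · rw [(mul_eq_zero.1 (coeff_of_mem t hit)).resolve_left hu0, zero_smul]
  · rw [coeff_of_notMem t hit, zero_smul]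

end OrthonormalWedges

theorem OrthonormalBasis.exists_fin_apply_eq {X : Type*} [NormedAddCommGroup X]
    [InnerProductSpace ℝ X] [FiniteDimensional ℝ X] {e : X} (he : ‖e‖ = 1) :
    ∃ (n : ℕ) (w : OrthonormalBasis (Fin n) ℝ X) (i : Fin n), w i = e := by
  have he' : Orthonormal ℝ ((↑) : ({e} : Set X) → X) := by simp [he]
  obtain ⟨u, w, heu, hw⟩ := he'.exists_orthonormalBasis_extension
  refine ⟨_, w.reindex u.equivFin, u.equivFin ⟨e, heu rfl⟩, ?_⟩
  simp [hw]

/-- For every nonzero multivector `M`, `isp M ⊆ osp M`. -/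
theorem isp_le_osp {X : Type*} [NormedAddCommGroup X] [InnerProductSpace ℝ X]
    [FiniteDimensional ℝ X]
    (innE : ExteriorAlgebra ℝ X →ₗ[ℝ] ExteriorAlgebra ℝ X →ₗ[ℝ] ℝ)
    (lcontr : ExteriorAlgebra ℝ X →ₗ[ℝ] ExteriorAlgebra ℝ X →ₗ[ℝ] ExteriorAlgebra ℝ X)
    (hinn : InnerOK innE) (hc : ContrOK innE lcontr)
    (M : ExteriorAlgebra ℝ X) (hM : M ≠ 0) :
    isp M ≤ osp lcontr M := by
  intro v hv
  refine (Submodule.mem_orthogonal _ _).2 fun u hu => ?_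
  obtain rfl | hv0 := eq_or_ne v 0
  · exact inner_zero_right u
  obtain ⟨n, w, i, hwi⟩ :=
    OrthonormalBasis.exists_fin_apply_eq (norm_smul_inv_norm (𝕜 := ℝ) hv0)
  have hwM : ι ℝ (w.toBasis i) * M = 0 := by
    rw [OrthonormalBasis.coe_toBasis, hwi]
    exact (isp M).smul_mem _ hv
  have huM (L : ExteriorAlgebra ℝ X) : innE M (ι ℝ u * L) = 0 := by
    rw [← hc, show lcontr (ι ℝ u) M = 0 from hu, map_zero, LinearMap.zero_apply]
  have h := basis_repr_eq_zero_of_ι_mul_eq_zero w.toBasis (by simpa using hinn n w) hM hwM huM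
  rw [OrthonormalBasis.coe_toBasis_repr_apply, OrthonormalBasis.repr_apply_apply, hwi,
    real_inner_smul_left, real_inner_comm] at h
  exact (mul_eq_zero.1 h).resolve_left (inv_ne_zero (norm_ne_zero_iff.2 hv0))

end
end

section
/- Let B be a nonzero blade and M ∈ ⋀X. Then [B] ⊆ isp(M) if and only if M = B∧N for some N ∈ ⋀X. In that case, for each subspace V ⊆ X with X = [B] ⊕ V, there is exactly one N ∈ ⋀V such that M = B∧N. -/
/-!
Setup: `X` is a finite-dimensional real inner product space, `⋀X` its exterior
algebra.  We hypothesize a bilinear form `innE` on the exterior algebra which makes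
the wedges of any orthonormal basis of `X` (over increasing index sets) orthonormal
— this characterizes the inner product of the paper — and a bilinear left
contraction `lcontr` adjoint to the wedge product: `⟨M⌟N, L⟩ = ⟨N, M∧L⟩`.
-/

noncomputable section

open ExteriorAlgebra

/-- The exterior product `v₁ ∧ ⋯ ∧ v_p` of a tuple of vectors. -/
def bladeOf {X : Type*} [AddCommGroup X] [Module ℝ X] {p : ℕ}
    (f : Fin p → X) : ExteriorAlgebra ℝ X :=
  (List.ofFn fun i => ι ℝ (f i)).prod

/-- The subalgebra `⋀V` of `⋀X` generated by a subspace `V` of `X`. -/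
def extSub {X : Type*} [AddCommGroup X] [Module ℝ X] (V : Submodule ℝ X) :
    Subalgebra ℝ (ExteriorAlgebra ℝ X) :=
  Algebra.adjoin ℝ ((ι ℝ : X →ₗ[ℝ] ExteriorAlgebra ℝ X) '' (V : Set X))

/-!
Let `W = [B]` and `X = W ⊕ V`, and take functionals `φᵢ` dual to the `fᵢ` and vanishing on `V`.
Because contraction is an antiderivation, `f₀ ∧ M = 0` gives `M = f₀ ∧ (φ₀⌋M)`, while
`φ₀⌋(f₀ ∧ z) = z` for `z ∈ ⋀(span{f₁, …} ⊕ V)`. Peeling off one vector at a time yields a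
factorization `M = B ∧ N₀` and the injectivity of `N ↦ B ∧ N` on `⋀V`. To move `N₀` into `⋀V`,
write `⋀X = ⋀W · ⋀V` (using `v ∧ a = â ∧ v`, with `â` the grade involution) and note that
`B ∧ a ∈ ℝB` for `a ∈ ⋀W`.
-/

open CliffordAlgebra Submodule

section CommRing

variable {R M : Type*} [CommRing R] [AddCommGroup M] [Module R M]

theorem ExteriorAlgebra.ι_mul_eq_involute_mul (m : M) (a : ExteriorAlgebra R M) :
    ι R m * a = involute a * ι R m := by
  induction a using CliffordAlgebra.induction with
  | algebraMap r => rw [AlgHom.commutes, Algebra.commutes]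
  | ι n =>
    rw [involute_ι, neg_mul, eq_neg_iff_add_eq_zero]
    exact ι_add_mul_swap m n
  | mul a b ha hb => rw [← mul_assoc, ha, mul_assoc, hb, map_mul, mul_assoc]
  | add a b ha hb => rw [mul_add, ha, hb, map_add, add_mul]

theorem eq_ι_mul_contractLeft (φ : Module.Dual R M) {x : M} {a : ExteriorAlgebra R M}
    (hx : φ x = 1) (ha : ι R x * a = 0) : a = ι R x * contractLeft φ a := by
  have := contractLeft_ι_mul (Q := 0) φ x a
  rw [ha, map_zero, hx, one_smul] at this
  exact sub_eq_zero.mp this.symm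

theorem ι_mul_contractLeft_eq_zero (φ : Module.Dual R M) {y : M} {a : ExteriorAlgebra R M}
    (hy : φ y = 0) (ha : ι R y * a = 0) : ι R y * contractLeft φ a = 0 := by
  have := contractLeft_ι_mul (Q := 0) φ y a
  rw [ha, map_zero, hy, zero_smul, zero_sub] at this
  exact neg_eq_zero.mp this.symm

end CommRing

theorem exists_dual_family {K X ι : Type*} [Field K] [AddCommGroup X] [Module K X]
    [DecidableEq ι] {f : ι → X} (hf : LinearIndependent K f) {V : Submodule K X}
    (hV : IsCompl (span K (Set.range f)) V) :
    ∃ φ : ι → Module.Dual K X,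
      (∀ i j, φ i (f j) = if i = j then 1 else 0) ∧ ∀ i, V ≤ LinearMap.ker (φ i) := by
  let b := Module.Basis.span hf
  refine ⟨fun i => (b.coord i).comp (projectionOnto _ V hV), fun i j => ?_, fun i => ?_⟩
  · have : projectionOnto _ V hV (f j) = b j := by
      rw [Module.Basis.span_apply]
      exact projectionOnto_apply_left hV ⟨f j, subset_span ⟨j, rfl⟩⟩
    simp [this, Finsupp.single_apply, eq_comm]
  · exact (ker_projectionOnto hV).ge.trans (LinearMap.ker_le_ker_comp _ _)

section Blades

variable {X : Type*} [AddCommGroup X] [Module ℝ X] {p : ℕ}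

theorem bladeOf_zero (f : Fin 0 → X) : bladeOf f = 1 := by
  simp [bladeOf]

theorem bladeOf_succ (f : Fin (p + 1) → X) :
    bladeOf f = ι ℝ (f 0) * bladeOf (Fin.tail f) := by
  simp [bladeOf, List.ofFn_succ, Fin.tail]

theorem involute_bladeOf (f : Fin p → X) : involute (bladeOf f) = (-1 : ℝ) ^ p • bladeOf f := by
  have := involute_prod_map_ι (Q := (0 : QuadraticForm ℝ X)) (List.ofFn f)
  rw [List.map_ofFn, List.length_ofFn] at this
  exact this

theorem linearIndependent_of_bladeOf_ne_zero {f : Fin p → X} (h : bladeOf f ≠ 0) :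
    LinearIndependent ℝ f := by
  by_contra hf
  exact h (by rw [bladeOf, ← ιMulti_apply]; exact AlternatingMap.map_linearDependent _ f hf)

theorem isp_le_isp_mul (M N : ExteriorAlgebra ℝ X) : isp M ≤ isp (M * N) := fun x hx => by
  change ι ℝ x * (M * N) = 0
  rw [← mul_assoc, show ι ℝ x * M = 0 from hx, zero_mul]

theorem span_range_le_isp_bladeOf (f : Fin p → X) : span ℝ (Set.range f) ≤ isp (bladeOf f) :=
  span_le.mpr <| Set.range_subset_iff.mpr fun i => ι_mul_prod_list f i

theorem bladeOf_mul_ι_eq_zero (f : Fin p → X) {x : X} (hx : x ∈ span ℝ (Set.range f)) :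
    bladeOf f * ι ℝ x = 0 := by
  have hx' : ι ℝ x * bladeOf f = 0 := span_range_le_isp_bladeOf f hx
  rw [← involute_involute (bladeOf f), ← ι_mul_eq_involute_mul, involute_bladeOf, mul_smul_comm,
    hx', smul_zero]

theorem ι_mem_extSub {U : Submodule ℝ X} {x : X} (hx : x ∈ U) : ι ℝ x ∈ extSub U :=
  Algebra.subset_adjoin ⟨x, hx, rfl⟩

theorem extSub_mono : Monotone (extSub (X := X)) :=
  fun _ _ h => Algebra.adjoin_mono (Set.image_mono h)

theorem bladeOf_mem_extSub {f : Fin p → X} {U : Submodule ℝ X} (hf : ∀ i, f i ∈ U) :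
    bladeOf f ∈ extSub U :=
  Subalgebra.list_prod_mem _ fun _ ha => by
    obtain ⟨i, rfl⟩ := List.mem_ofFn.mp ha
    exact ι_mem_extSub (hf i)

theorem involute_mem_extSub {U : Submodule ℝ X} {a : ExteriorAlgebra ℝ X} (ha : a ∈ extSub U) :
    involute a ∈ extSub U := by
  induction ha using Algebra.adjoin_induction with
  | mem x hx =>
    obtain ⟨u, hu, rfl⟩ := hx
    rw [involute_ι, ← map_neg]
    exact ι_mem_extSub (neg_mem hu)
  | algebraMap r => rw [AlgHom.commutes]; exact algebraMap_mem _ r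
  | add a b _ _ ha hb => rw [map_add]; exact add_mem ha hb
  | mul a b _ _ ha hb => rw [map_mul]; exact mul_mem ha hb

theorem bladeOf_mul_mem_span_singleton (f : Fin p → X) {a : ExteriorAlgebra ℝ X}
    (ha : a ∈ extSub (span ℝ (Set.range f))) : bladeOf f * a ∈ ℝ ∙ bladeOf f := by
  induction ha using Algebra.adjoin_induction with
  | mem x hx =>
    obtain ⟨w, hw, rfl⟩ := hx
    rw [bladeOf_mul_ι_eq_zero f hw]
    exact zero_mem _
  | algebraMap r =>
    rw [← Algebra.commutes, ← Algebra.smul_def]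
    exact smul_mem _ r (mem_span_singleton_self _)
  | add a b _ _ ha hb => rw [mul_add]; exact add_mem ha hb
  | mul a b _ _ ha hb =>
    obtain ⟨r, hr⟩ := mem_span_singleton.mp ha
    rw [← mul_assoc, ← hr, smul_mul_assoc]
    exact smul_mem _ r hb

theorem extSub_mul_extSub_eq_top {W V : Submodule ℝ X} (h : W ⊔ V = ⊤) :
    Subalgebra.toSubmodule (extSub W) * Subalgebra.toSubmodule (extSub V) = ⊤ := by
  set P := Subalgebra.toSubmodule (extSub W) * Subalgebra.toSubmodule (extSub V)
  have ι_mul_mem (x : X) {y : ExteriorAlgebra ℝ X} (hy : y ∈ P) : ι ℝ x * y ∈ P := by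
    obtain ⟨w, hw, v, hv, rfl⟩ := mem_sup.mp (h ▸ mem_top : x ∈ W ⊔ V)
    induction hy using Submodule.mul_induction_on' with
    | mem_mul_mem a ha n hn =>
      rw [map_add, add_mul, ← mul_assoc, ← mul_assoc, ι_mul_eq_involute_mul v, mul_assoc (involute a)]
      exact add_mem (mul_mem_mul (Subalgebra.mul_mem _ (ι_mem_extSub hw) ha) hn)
        (mul_mem_mul (involute_mem_extSub ha) (Subalgebra.mul_mem _ (ι_mem_extSub hv) hn))
    | add y₁ _ y₂ _ h₁ h₂ => rw [mul_add]; exact add_mem h₁ h₂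
  have mul_mem' (z : ExteriorAlgebra ℝ X) {y : ExteriorAlgebra ℝ X} (hy : y ∈ P) : z * y ∈ P := by
    induction z using CliffordAlgebra.induction generalizing y with
    | algebraMap r => rw [← Algebra.smul_def]; exact smul_mem _ r hy
    | ι x => exact ι_mul_mem x hy
    | mul a b ha hb => rw [mul_assoc]; exact ha (hb hy)
    | add a b ha hb => rw [add_mul]; exact add_mem (ha hy) (hb hy)
  have one_mem' : (1 : ExteriorAlgebra ℝ X) ∈ P := by
    simpa using mul_mem_mul (M := Subalgebra.toSubmodule (extSub W))
      (N := Subalgebra.toSubmodule (extSub V)) (extSub W).one_mem (extSub V).one_mem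
  exact eq_top_iff.mpr fun z _ => by simpa using mul_mem' z one_mem'

theorem exists_mem_extSub_bladeOf_mul_eq (f : Fin p → X) {V : Submodule ℝ X}
    (hV : span ℝ (Set.range f) ⊔ V = ⊤) (z : ExteriorAlgebra ℝ X) :
    ∃ N ∈ extSub V, bladeOf f * z = bladeOf f * N := by
  have hz : z ∈ Subalgebra.toSubmodule (extSub (span ℝ (Set.range f))) *
      Subalgebra.toSubmodule (extSub V) := by
    rw [extSub_mul_extSub_eq_top hV]; exact mem_top
  induction hz using Submodule.mul_induction_on' with
  | mem_mul_mem a ha n hn =>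
    obtain ⟨r, hr⟩ := mem_span_singleton.mp (bladeOf_mul_mem_span_singleton f ha)
    exact ⟨r • n, Subalgebra.smul_mem _ hn r, by rw [← mul_assoc, ← hr, smul_mul_assoc, mul_smul_comm]⟩
  | add y₁ _ y₂ _ h₁ h₂ =>
    obtain ⟨N₁, hN₁, e₁⟩ := h₁
    obtain ⟨N₂, hN₂, e₂⟩ := h₂
    exact ⟨N₁ + N₂, add_mem hN₁ hN₂, by rw [mul_add, mul_add, e₁, e₂]⟩

end Blades

section Contraction

variable {X : Type*} [AddCommGroup X] [Module ℝ X] (φ : Module.Dual ℝ X)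

theorem contractLeft_eq_zero_of_mem_extSub {U : Submodule ℝ X} (hU : U ≤ LinearMap.ker φ)
    {z : ExteriorAlgebra ℝ X} (hz : z ∈ extSub U) : contractLeft φ z = 0 := by
  suffices ∀ y, contractLeft φ y = 0 → contractLeft φ (z * y) = 0 by
    simpa using this 1 (contractLeft_one (0 : QuadraticForm ℝ X) φ)
  induction hz using Algebra.adjoin_induction with
  | mem x hx =>
    obtain ⟨u, hu, rfl⟩ := hx
    intro y hy
    rw [contractLeft_ι_mul, hy, mul_zero, sub_zero, LinearMap.mem_ker.mp (hU hu), zero_smul]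
  | algebraMap r => intro y hy; rw [← Algebra.smul_def, map_smul, hy, smul_zero]
  | add a b _ _ ha hb => intro y hy; rw [add_mul, map_add, ha y hy, hb y hy, add_zero]
  | mul a b _ _ ha hb => intro y hy; rw [mul_assoc]; exact ha _ (hb y hy)

theorem eq_zero_of_ι_mul_eq_zero {U : Submodule ℝ X} (hU : U ≤ LinearMap.ker φ) {x : X}
    (hx : φ x = 1) {z : ExteriorAlgebra ℝ X} (hz : z ∈ extSub U) (h : ι ℝ x * z = 0) : z = 0 := by
  simpa [contractLeft_eq_zero_of_mem_extSub φ hU hz] using eq_ι_mul_contractLeft φ hx h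

end Contraction

section Factorization

variable {X : Type*} [AddCommGroup X] [Module ℝ X] {p : ℕ}

theorem exists_eq_bladeOf_mul {f : Fin p → X} {φ : Fin p → Module.Dual ℝ X}
    (hφ : ∀ i j, φ i (f j) = if i = j then 1 else 0) {M : ExteriorAlgebra ℝ X}
    (hM : ∀ i, f i ∈ isp M) : ∃ N, M = bladeOf f * N := by
  induction p generalizing M with
  | zero => exact ⟨M, by rw [bladeOf_zero, one_mul]⟩
  | succ p ih =>
    have hM₀ := eq_ι_mul_contractLeft (φ 0) (by simpa using hφ 0 0) (hM 0)
    obtain ⟨N, hN⟩ := ih (f := Fin.tail f) (φ := fun i => φ i.succ)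
      (fun i j => by simpa [Fin.tail] using hφ i.succ j.succ)
      fun i => ι_mul_contractLeft_eq_zero (φ 0)
        (by simpa [Fin.tail, (Fin.succ_ne_zero i).symm] using hφ 0 i.succ) (hM i.succ)
    exact ⟨N, by rw [hM₀, hN, bladeOf_succ, mul_assoc]⟩

theorem eq_zero_of_bladeOf_mul_eq_zero {f : Fin p → X} {φ : Fin p → Module.Dual ℝ X}
    (hφ : ∀ i j, φ i (f j) = if i = j then 1 else 0) {V : Submodule ℝ X}
    (hφV : ∀ i, V ≤ LinearMap.ker (φ i)) {N : ExteriorAlgebra ℝ X} (hN : N ∈ extSub V)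
    (h : bladeOf f * N = 0) : N = 0 := by
  induction p with
  | zero => simpa [bladeOf_zero] using h
  | succ p ih =>
    refine ih (f := Fin.tail f) (φ := fun i => φ i.succ)
      (fun i j => by simpa [Fin.tail] using hφ i.succ j.succ) (fun i => hφV i.succ) ?_
    have hU : span ℝ (Set.range (Fin.tail f)) ⊔ V ≤ LinearMap.ker (φ 0) :=
      sup_le (span_le.mpr <| Set.range_subset_iff.mpr fun j => by
        simpa [Fin.tail, (Fin.succ_ne_zero j).symm] using hφ 0 j.succ) (hφV 0)
    refine eq_zero_of_ι_mul_eq_zero (φ 0) hU (by simpa using hφ 0 0)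
      (mul_mem (bladeOf_mem_extSub fun i => mem_sup_left (subset_span ⟨i, rfl⟩))
        (extSub_mono le_sup_right hN)) ?_
    rwa [← mul_assoc, ← bladeOf_succ]

theorem exists_mem_extSub_eq_bladeOf_mul {f : Fin p → X} (hf : LinearIndependent ℝ f)
    {V : Submodule ℝ X} (hV : IsCompl (span ℝ (Set.range f)) V) {M : ExteriorAlgebra ℝ X}
    (hM : span ℝ (Set.range f) ≤ isp M) : ∃ N ∈ extSub V, M = bladeOf f * N := by
  obtain ⟨φ, hφ, -⟩ := exists_dual_family hf hV
  obtain ⟨N₀, rfl⟩ := exists_eq_bladeOf_mul hφ fun i => hM (subset_span ⟨i, rfl⟩)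
  exact exists_mem_extSub_bladeOf_mul_eq f hV.codisjoint.eq_top N₀

theorem injOn_bladeOf_mul {f : Fin p → X} (hf : LinearIndependent ℝ f) {V : Submodule ℝ X}
    (hV : IsCompl (span ℝ (Set.range f)) V) : Set.InjOn (bladeOf f * ·) (extSub V) := by
  obtain ⟨φ, hφ, hφV⟩ := exists_dual_family hf hV
  intro N₁ hN₁ N₂ hN₂ h
  exact sub_eq_zero.mp <| eq_zero_of_bladeOf_mul_eq_zero hφ hφV (sub_mem hN₁ hN₂)
    (by rw [mul_sub]; exact sub_eq_zero.mpr h)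

end Factorization

theorem inner_blade_factorization_general {X : Type*} [NormedAddCommGroup X]
    [InnerProductSpace ℝ X]
    (p : ℕ) (f : Fin p → X) (c : ℝ) (B : ExteriorAlgebra ℝ X)
    (hB : B = c • bladeOf f) (hB0 : B ≠ 0) (M : ExteriorAlgebra ℝ X) :
    (Submodule.span ℝ (Set.range f) ≤ isp M ↔ ∃ N, M = B * N) ∧
    (Submodule.span ℝ (Set.range f) ≤ isp M →
      ∀ V : Submodule ℝ X, IsCompl (Submodule.span ℝ (Set.range f)) V →
        ∃! N : ExteriorAlgebra ℝ X, N ∈ extSub V ∧ M = B * N) := by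
  subst hB
  have hc : c ≠ 0 := left_ne_zero_of_smul hB0
  have hf := linearIndependent_of_bladeOf_ne_zero (right_ne_zero_of_smul hB0)
  have factor (V : Submodule ℝ X) (hV : IsCompl (span ℝ (Set.range f)) V)
      (hM : span ℝ (Set.range f) ≤ isp M) : ∃! N, N ∈ extSub V ∧ M = c • bladeOf f * N := by
    obtain ⟨N, hN, rfl⟩ := exists_mem_extSub_eq_bladeOf_mul hf hV hM
    refine ⟨c⁻¹ • N, ⟨Subalgebra.smul_mem _ hN _, ?_⟩, fun N' ⟨hN', h⟩ => ?_⟩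
    · rw [smul_mul_assoc, mul_smul_comm, smul_inv_smul₀ hc]
    · refine injOn_bladeOf_mul hf hV hN' (Subalgebra.smul_mem _ hN _) ?_
      rw [smul_mul_assoc] at h
      simp only [mul_smul_comm, h, inv_smul_smul₀ hc]
  refine ⟨⟨fun hM => ?_, ?_⟩, fun hM V hV => factor V hV hM⟩
  · obtain ⟨V, hV⟩ := Submodule.exists_isCompl (span ℝ (Set.range f))
    exact (factor V hV hM).exists.imp fun _ hN => hN.2
  · rintro ⟨N, rfl⟩
    rw [smul_mul_assoc, ← mul_smul_comm]
    exact (span_range_le_isp_bladeOf f).trans (isp_le_isp_mul _ _)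

/-- A nonzero blade `B = c • (v₁ ∧ ⋯ ∧ v_p)` satisfies
`[B] ⊆ isp M` iff `M = B ∧ N` for some `N`, and given a complement `V` of `[B]`
in `X` such an `N` can be chosen uniquely in `⋀V`. -/
theorem inner_blade_factorization {X : Type*} [NormedAddCommGroup X]
    [InnerProductSpace ℝ X] [FiniteDimensional ℝ X]
    (p : ℕ) (f : Fin p → X) (c : ℝ) (B : ExteriorAlgebra ℝ X)
    (hB : B = c • bladeOf f) (hB0 : B ≠ 0) (M : ExteriorAlgebra ℝ X) :
    (Submodule.span ℝ (Set.range f) ≤ isp M ↔ ∃ N, M = B * N) ∧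
    (Submodule.span ℝ (Set.range f) ≤ isp M →
      ∀ V : Submodule ℝ X, IsCompl (Submodule.span ℝ (Set.range f)) V →
        ∃! N : ExteriorAlgebra ℝ X, N ∈ extSub V ∧ M = B * N) :=
  inner_blade_factorization_general p f c B hB hB0 M

end
end

section
/- For every nonzero M ∈ ⋀X: (i) in(M) ≤ bot(M) ≤ top(M) ≤ out(M); (ii) in(M) + out(★M) = n and bot(M) + top(★M) = n. -/
/-!
Setup: `X` is a finite-dimensional real inner product space, `⋀X` its exterior
algebra.  We hypothesize a bilinear form `innE` on the exterior algebra which makes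
the wedges of any orthonormal basis of `X` (over increasing index sets) orthonormal
— this characterizes the inner product of the paper — and a bilinear left
contraction `lcontr` adjoint to the wedge product: `⟨M⌟N, L⟩ = ⟨N, M∧L⟩`.
-/

noncomputable section

open ExteriorAlgebra

/-- Projection onto the grade-`p` homogeneous component of the exterior algebra. -/
def gradeProj {X : Type*} [AddCommGroup X] [Module ℝ X] (p : ℕ) :
    ExteriorAlgebra ℝ X →ₗ[ℝ] ExteriorAlgebra ℝ X :=
  GradedAlgebra.proj (fun i : ℕ => ⋀[ℝ]^i X) p

/-- The bottom grade: least `p` with `⟨M⟩_p ≠ 0`. -/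
noncomputable def bgrade {X : Type*} [AddCommGroup X] [Module ℝ X]
    (M : ExteriorAlgebra ℝ X) : ℕ :=
  sInf {p | gradeProj p M ≠ 0}

/-- The top grade: greatest `p` with `⟨M⟩_p ≠ 0`. -/
noncomputable def tgrade {X : Type*} [AddCommGroup X] [Module ℝ X]
    (M : ExteriorAlgebra ℝ X) : ℕ :=
  sSup {p | gradeProj p M ≠ 0}


/-!
Expand multivectors in the blades `e_s = b_{s₁} ∧ ⋯ ∧ b_{sₖ}` of an orthonormal basis `b` of `X`;
the inner product makes `⟨M, e_s⟩` the `e_s`-coefficient of `M`. Then `b_i ∧ M = 0` iff every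
blade of `M` contains `i`, `b_i ⌟ M = 0` iff no blade of `M` contains `i`, and, since
`Ω = ±e_{1⋯n}`, the `e_s`-coefficient of `★M` is `±` the `e_{sᶜ}`-coefficient of `M`.

For `b` adapted to `{v : v ⌟ M = 0}` the blades of `M` avoid `n - out(M)` indices, so
`top(M) ≤ out(M)`. For `b₁ = v / ‖v‖` the conditions `b₁ ∧ M = 0` and `b₁ ⌟ ★M = 0` become the
same condition on blades, so `isp M = {v : v ⌟ ★M = 0}` and `in(M) + out(★M) = n`; complementing
blades gives `bot(M) + top(★M) = n`.
-/

namespace ExteriorAlgebra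

variable {R M I : Type*} [CommRing R] [AddCommGroup M] [Module R M] [LinearOrder I]
  (b : Module.Basis I R M)

theorem basis_apply_eq_prod (s : Finset I) :
    b.ExteriorAlgebra s = ((s.sort (· ≤ ·)).map fun i => ι R (b i)).prod := by
  rw [basis_apply_ofCard b rfl, ιMulti_family, ιMulti_apply, List.ofFn_eq_map,
    ← Finset.listMap_orderEmbOfFin_finRange s rfl, List.map_map]
  rfl

theorem basis_singleton (i : I) : b.ExteriorAlgebra {i} = ι R (b i) := by
  simp [basis_apply_eq_prod]

theorem basis_mem_exteriorPower (s : Finset I) : b.ExteriorAlgebra s ∈ ⋀[R]^s.card M := by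
  rw [basis_apply_ofCard b rfl]
  exact ιMulti_range R _ (Set.mem_range_self _)

theorem basis_mul_basis_of_not_disjoint {s t : Finset I} (h : ¬Disjoint s t) :
    b.ExteriorAlgebra s * b.ExteriorAlgebra t = 0 :=
  basis_mul_of_not_disjoint b (Set.powersetCard.ofCard (s := s) rfl)
    (Set.powersetCard.ofCard (s := t) rfl) h

theorem exists_basis_mul_basis_of_disjoint {s t : Finset I} (h : Disjoint s t) :
    ∃ ε : ℤˣ, b.ExteriorAlgebra s * b.ExteriorAlgebra t = ε • b.ExteriorAlgebra (s ∪ t) := by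
  have := basis_mul_of_disjoint b (Set.powersetCard.ofCard (s := s) rfl)
    (Set.powersetCard.ofCard (s := t) rfl) h
  exact ⟨_, this.trans (by congr 2; exact Finset.disjUnion_eq_union _ _ h)⟩

theorem isUnit_basis_repr_basis_mul_basis {s t : Finset I} (h : Disjoint s t) :
    IsUnit (b.ExteriorAlgebra.repr (b.ExteriorAlgebra s * b.ExteriorAlgebra t) (s ∪ t)) := by
  obtain ⟨ε, hε⟩ := exists_basis_mul_basis_of_disjoint b h
  rcases Int.units_eq_one_or ε with rfl | rfl <;> simp [hε, Units.smul_def]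

theorem basis_mul_basis_of_disjoint {s t : Finset I} (h : Disjoint s t) :
    b.ExteriorAlgebra s * b.ExteriorAlgebra t =
      b.ExteriorAlgebra.repr (b.ExteriorAlgebra s * b.ExteriorAlgebra t) (s ∪ t) •
        b.ExteriorAlgebra (s ∪ t) := by
  obtain ⟨ε, hε⟩ := exists_basis_mul_basis_of_disjoint b h
  rw [hε, Units.smul_def, map_zsmul, Module.Basis.repr_self]
  simp [← Int.cast_smul_eq_zsmul R]

theorem basis_repr_basis_mul_basis_eq_zero {s t u : Finset I} (h : Disjoint s t → s ∪ t ≠ u) :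
    b.ExteriorAlgebra.repr (b.ExteriorAlgebra s * b.ExteriorAlgebra t) u = 0 := by
  by_cases hst : Disjoint s t
  · obtain ⟨ε, hε⟩ := exists_basis_mul_basis_of_disjoint b hst
    rw [hε, Units.smul_def, map_zsmul, Finsupp.smul_apply, Module.Basis.repr_self,
      Finsupp.single_apply, if_neg (h hst), smul_zero]
  · simp [basis_mul_basis_of_not_disjoint b hst]

theorem basis_repr_basis_mul {u s : Finset I} (h : Disjoint u s) (A : ExteriorAlgebra R M) :
    b.ExteriorAlgebra.repr (b.ExteriorAlgebra u * A) (u ∪ s) =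
      b.ExteriorAlgebra.repr (b.ExteriorAlgebra u * b.ExteriorAlgebra s) (u ∪ s) *
        b.ExteriorAlgebra.repr A s := by
  set B := b.ExteriorAlgebra
  have key : (B.coord (u ∪ s)).comp (LinearMap.mulLeft R (B u)) =
      B.repr (B u * B s) (u ∪ s) • B.coord s := by
    refine B.ext fun t => ?_
    by_cases hts : t = s
    · subst hts; simp
    · have : B.repr (B u * B t) (u ∪ s) = 0 := by
        refine basis_repr_basis_mul_basis_eq_zero b fun hut hunion => hts ?_
        rw [← Finset.union_sdiff_cancel_left hut, hunion, Finset.union_sdiff_cancel_left h]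
      simp [this, hts]
  simpa using LinearMap.congr_fun key A

theorem basis_repr_mul_basis {s u : Finset I} (h : Disjoint s u) (A : ExteriorAlgebra R M) :
    b.ExteriorAlgebra.repr (A * b.ExteriorAlgebra u) (s ∪ u) =
      b.ExteriorAlgebra.repr (b.ExteriorAlgebra s * b.ExteriorAlgebra u) (s ∪ u) *
        b.ExteriorAlgebra.repr A s := by
  set B := b.ExteriorAlgebra
  have key : (B.coord (s ∪ u)).comp (LinearMap.mulRight R (B u)) =
      B.repr (B s * B u) (s ∪ u) • B.coord s := by
    refine B.ext fun t => ?_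
    by_cases hts : t = s
    · subst hts; simp
    · have : B.repr (B t * B u) (s ∪ u) = 0 := by
        refine basis_repr_basis_mul_basis_eq_zero b fun htu hunion => hts ?_
        rw [← Finset.union_sdiff_cancel_right htu, hunion, Finset.union_sdiff_cancel_right h]
      simp [this, hts]
  simpa using LinearMap.congr_fun key A

theorem ι_basis_mul_eq_zero_iff (i : I) (A : ExteriorAlgebra R M) :
    ι R (b i) * A = 0 ↔ ∀ s, i ∉ s → b.ExteriorAlgebra.repr A s = 0 := by
  rw [← basis_singleton]
  constructor
  · intro h s hi
    have hdisj : Disjoint {i} s := Finset.disjoint_singleton_left.2 hi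
    have := basis_repr_basis_mul b hdisj A
    rw [h, map_zero, Finsupp.zero_apply, eq_comm] at this
    exact ((isUnit_basis_repr_basis_mul_basis b hdisj).mul_right_eq_zero).1 this
  · intro h
    rw [← b.ExteriorAlgebra.linearCombination_repr A, Finsupp.linearCombination_apply,
      Finsupp.mul_sum]
    refine Finset.sum_eq_zero fun s _ => ?_
    dsimp only
    by_cases hi : i ∈ s
    · rw [mul_smul_comm, basis_mul_basis_of_not_disjoint b
        (Finset.not_disjoint_iff.2 ⟨i, Finset.mem_singleton_self i, hi⟩), smul_zero]
    · rw [h s hi, zero_smul, mul_zero]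

end ExteriorAlgebra

theorem wedgeOf_eq_basis {X : Type*} [AddCommGroup X] [Module ℝ X] {n : ℕ}
    (b : Module.Basis (Fin n) ℝ X) (s : Finset (Fin n)) :
    wedgeOf ⇑b s = b.ExteriorAlgebra s :=
  (basis_apply_eq_prod b s).symm

@[simp]
theorem mem_isp {X : Type*} [AddCommGroup X] [Module ℝ X] {M : ExteriorAlgebra ℝ X} {v : X} :
    v ∈ isp M ↔ ι ℝ v * M = 0 :=
  Iff.rfl

@[simp]
theorem mem_ospKer {X : Type*} [NormedAddCommGroup X] [InnerProductSpace ℝ X]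
    {lcontr : ExteriorAlgebra ℝ X →ₗ[ℝ] ExteriorAlgebra ℝ X →ₗ[ℝ] ExteriorAlgebra ℝ X}
    {M : ExteriorAlgebra ℝ X} {v : X} :
    v ∈ ospKer lcontr M ↔ lcontr (ι ℝ v) M = 0 :=
  Iff.rfl

section Grades

variable {X I : Type*} [AddCommGroup X] [Module ℝ X] [LinearOrder I] (b : Module.Basis I ℝ X)

theorem gradeProj_of_mem {p : ℕ} {A : ExteriorAlgebra ℝ X} (h : A ∈ ⋀[ℝ]^p X) :
    gradeProj p A = A := by
  rw [gradeProj, GradedAlgebra.proj_apply]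
  exact DirectSum.decompose_of_mem_same _ h

theorem gradeProj_basis (p : ℕ) (s : Finset I) :
    gradeProj p (b.ExteriorAlgebra s) = if s.card = p then b.ExteriorAlgebra s else 0 := by
  split_ifs with h
  · exact gradeProj_of_mem (h ▸ basis_mem_exteriorPower b s)
  · rw [gradeProj, GradedAlgebra.proj_apply]
    exact DirectSum.decompose_of_mem_ne _ (basis_mem_exteriorPower b s) h

theorem basis_repr_gradeProj (p : ℕ) (A : ExteriorAlgebra ℝ X) (s : Finset I) :
    b.ExteriorAlgebra.repr (gradeProj p A) s =
      if s.card = p then b.ExteriorAlgebra.repr A s else 0 := by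
  have key : (b.ExteriorAlgebra.coord s).comp (gradeProj p) =
      if s.card = p then b.ExteriorAlgebra.coord s else 0 :=
    b.ExteriorAlgebra.ext fun t => by
      by_cases hts : t = s <;> split_ifs <;> simp [gradeProj_basis, apply_ite, *]
  split_ifs at key ⊢ <;> simpa using LinearMap.congr_fun key A

theorem gradeProj_ne_zero_iff (p : ℕ) (A : ExteriorAlgebra ℝ X) :
    gradeProj p A ≠ 0 ↔ ∃ s : Finset I, s.card = p ∧ b.ExteriorAlgebra.repr A s ≠ 0 := by
  rw [Ne, b.ExteriorAlgebra.ext_elem_iff]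
  simp [basis_repr_gradeProj]

theorem eq_basis_repr_smul_basis_univ [Fintype I] {Ω : ExteriorAlgebra ℝ X}
    (hΩ : Ω ∈ ⋀[ℝ]^(Fintype.card I) X) :
    Ω = b.ExteriorAlgebra.repr Ω Finset.univ • b.ExteriorAlgebra Finset.univ := by
  refine b.ExteriorAlgebra.ext_elem fun s => ?_
  have hs := basis_repr_gradeProj b (Fintype.card I) Ω s
  rw [gradeProj_of_mem hΩ] at hs
  simp only [Finset.card_eq_iff_eq_univ] at hs
  by_cases h : s = Finset.univ <;> simp [hs, h]

end Grades

section FiniteDimensional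

variable {X : Type*} [AddCommGroup X] [Module ℝ X] [FiniteDimensional ℝ X]

theorem le_finrank_of_gradeProj_ne_zero {p : ℕ} {A : ExteriorAlgebra ℝ X} (h : gradeProj p A ≠ 0) :
    p ≤ Module.finrank ℝ X := by
  obtain ⟨s, rfl, -⟩ := (gradeProj_ne_zero_iff (Module.finBasis ℝ X) p A).1 h
  simpa using s.card_le_univ

theorem nonempty_gradeProj_ne_zero {M : ExteriorAlgebra ℝ X} (hM : M ≠ 0) :
    {p | gradeProj p M ≠ 0}.Nonempty := by
  let B := (Module.finBasis ℝ X).ExteriorAlgebra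
  obtain ⟨s, hs⟩ := Finsupp.ne_iff.1 (B.repr.map_ne_zero_iff.2 hM)
  exact ⟨s.card, (gradeProj_ne_zero_iff (Module.finBasis ℝ X) _ M).2 ⟨s, rfl, hs⟩⟩

theorem bgrade_le_tgrade {M : ExteriorAlgebra ℝ X} (hM : M ≠ 0) : bgrade M ≤ tgrade M :=
  csInf_le_csSup (nonempty_gradeProj_ne_zero hM) (OrderBot.bddBelow _)
    ⟨_, fun _ hp => le_finrank_of_gradeProj_ne_zero hp⟩

end FiniteDimensional

section InnerProduct

variable {X : Type*} [NormedAddCommGroup X] [InnerProductSpace ℝ X] {n : ℕ}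
  {innE : ExteriorAlgebra ℝ X →ₗ[ℝ] ExteriorAlgebra ℝ X →ₗ[ℝ] ℝ}
  {lcontr : ExteriorAlgebra ℝ X →ₗ[ℝ] ExteriorAlgebra ℝ X →ₗ[ℝ] ExteriorAlgebra ℝ X}
  (b : OrthonormalBasis (Fin n) ℝ X)

theorem InnerOK.inner_basis_left (hinn : InnerOK innE) (s : Finset (Fin n))
    (A : ExteriorAlgebra ℝ X) :
    innE (b.toBasis.ExteriorAlgebra s) A = b.toBasis.ExteriorAlgebra.repr A s := by
  refine LinearMap.congr_fun (b.toBasis.ExteriorAlgebra.ext fun t => ?_ :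
    innE (b.toBasis.ExteriorAlgebra s) = b.toBasis.ExteriorAlgebra.coord s) A
  have := hinn n b s t
  simp only [← b.coe_toBasis, wedgeOf_eq_basis] at this
  simp [this, Finsupp.single_apply, eq_comm]

theorem InnerOK.inner_basis_right (hinn : InnerOK innE) (A : ExteriorAlgebra ℝ X)
    (s : Finset (Fin n)) :
    innE A (b.toBasis.ExteriorAlgebra s) = b.toBasis.ExteriorAlgebra.repr A s := by
  refine LinearMap.congr_fun (b.toBasis.ExteriorAlgebra.ext fun t => ?_ :
    innE.flip (b.toBasis.ExteriorAlgebra s) = b.toBasis.ExteriorAlgebra.coord s) A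
  have := hinn n b t s
  simp only [← b.coe_toBasis, wedgeOf_eq_basis] at this
  simp [this, Finsupp.single_apply]

theorem lcontr_ι_basis_eq_zero_iff (hinn : InnerOK innE) (hc : ContrOK innE lcontr) (i : Fin n)
    (A : ExteriorAlgebra ℝ X) :
    lcontr (ι ℝ (b i)) A = 0 ↔ ∀ s, i ∈ s → b.toBasis.ExteriorAlgebra.repr A s = 0 := by
  have hmul (t : Finset (Fin n)) : innE (lcontr (ι ℝ (b i)) A) (b.toBasis.ExteriorAlgebra t) =
      innE A (b.toBasis.ExteriorAlgebra {i} * b.toBasis.ExteriorAlgebra t) := by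
    rw [hc, basis_singleton, b.coe_toBasis]
  rw [b.toBasis.ExteriorAlgebra.ext_elem_iff]
  simp only [map_zero, Finsupp.zero_apply, ← hinn.inner_basis_right, hmul]
  constructor
  · intro h s hi
    have hdisj : Disjoint {i} (s.erase i) := by simp
    have := h (s.erase i)
    rwa [basis_mul_basis_of_disjoint _ hdisj, map_smul, smul_eq_mul,
      (isUnit_basis_repr_basis_mul_basis _ hdisj).mul_right_eq_zero, ← Finset.insert_eq,
      Finset.insert_erase hi] at this
  · intro h t
    by_cases hi : i ∈ t
    · rw [basis_mul_basis_of_not_disjoint b.toBasis (by simpa using hi), map_zero]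
    · rw [basis_mul_basis_of_disjoint _ (Finset.disjoint_singleton_left.2 hi), map_smul,
        h _ (by simp), smul_zero]

theorem basis_repr_lcontr_ne_zero_iff (hinn : InnerOK innE) (hc : ContrOK innE lcontr)
    {Ω : ExteriorAlgebra ℝ X} (hΩmem : Ω ∈ ⋀[ℝ]^(Module.finrank ℝ X) X)
    (hΩunit : innE Ω Ω = 1) (A : ExteriorAlgebra ℝ X) (t : Finset (Fin n)) :
    b.toBasis.ExteriorAlgebra.repr (lcontr A Ω) t ≠ 0 ↔
      b.toBasis.ExteriorAlgebra.repr A tᶜ ≠ 0 := by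
  rw [Module.finrank_eq_card_basis b.toBasis] at hΩmem
  set B := b.toBasis.ExteriorAlgebra
  obtain ⟨c, hcu, rfl⟩ : ∃ c, IsUnit c ∧ Ω = c • B Finset.univ := by
    have hΩ := eq_basis_repr_smul_basis_univ b.toBasis hΩmem
    refine ⟨_, IsUnit.of_mul_eq_one (B.repr Ω Finset.univ) ?_, hΩ⟩
    calc _ = innE (B.repr Ω Finset.univ • B Finset.univ) Ω := by
          rw [map_smul, LinearMap.smul_apply, hinn.inner_basis_left, smul_eq_mul]
      _ = 1 := by rw [← hΩ, hΩunit]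
  have hdisj : Disjoint tᶜ t := disjoint_compl_left
  have hunion : tᶜ ∪ t = Finset.univ := by rw [Finset.union_comm, Finset.union_compl]
  rw [← hinn.inner_basis_right, hc, map_smul, LinearMap.smul_apply, hinn.inner_basis_left,
    ← hunion, basis_repr_mul_basis _ hdisj, smul_eq_mul, ← mul_assoc, Ne,
    (hcu.mul (isUnit_basis_repr_basis_mul_basis _ hdisj)).mul_right_eq_zero]

end InnerProduct

theorem exists_orthonormalBasis_mem_submodule {X : Type*} [NormedAddCommGroup X]
    [InnerProductSpace ℝ X] [FiniteDimensional ℝ X] (U : Submodule ℝ X) :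
    ∃ (b : OrthonormalBasis (Fin (Module.finrank ℝ X)) ℝ X)
      (T : Finset (Fin (Module.finrank ℝ X))),
      T.card = Module.finrank ℝ U ∧ ∀ i ∈ T, b i ∈ U := by
  set k := Module.finrank ℝ U
  let u := stdOrthonormalBasis ℝ U
  let v : Fin (Module.finrank ℝ X) → X := fun i => if h : (i : ℕ) < k then u ⟨i, h⟩ else 0
  let s : Set (Fin (Module.finrank ℝ X)) := {i | (i : ℕ) < k}
  have hv : Orthonormal ℝ (s.domRestrict v) := by
    have : s.domRestrict v = (U.subtypeₗᵢ ∘ u) ∘ fun i => ⟨i.1, i.2⟩ := by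
      funext ⟨i, hi⟩
      simp [v, show (i : ℕ) < k from hi]
    rw [this]
    refine (u.orthonormal.comp_linearIsometry _).comp _ fun i j hij => ?_
    simpa [Fin.ext_iff, Subtype.ext_iff] using hij
  obtain ⟨b, hb⟩ := hv.exists_orthonormalBasis_extension_of_card_eq (by simp)
  refine ⟨b, Finset.univ.filter fun i => (i : ℕ) < k, ?_, fun i hi => ?_⟩
  · rw [Fin.card_filter_val_lt, min_eq_right U.finrank_le]
  · have hi : (i : ℕ) < k := by simpa using hi
    rw [hb i hi]
    simp [v, hi]

theorem Nat.sInf_add_sSup_eq_of_mem_iff_sub_mem {S S' : Set ℕ} {n : ℕ} (hne : S.Nonempty)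
    (hS : ∀ p ∈ S, p ≤ n) (hS' : ∀ q, q ∈ S' ↔ q ≤ n ∧ n - q ∈ S) : sInf S + sSup S' = n := by
  have hmem := Nat.sInf_mem hne
  have hinf := hS _ hmem
  have hle : sSup S' ≤ n - sInf S := csSup_le' fun q hq => by
    obtain ⟨hqn, hq⟩ := (hS' q).1 hq
    have := Nat.sInf_le hq
    omega
  have hge : n - sInf S ≤ sSup S' :=
    le_csSup ⟨n, fun q hq => ((hS' q).1 hq).1⟩
      ((hS' _).2 ⟨Nat.sub_le _ _, by rwa [Nat.sub_sub_self hinf]⟩)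
  omega

section Duality

variable {X : Type*} [NormedAddCommGroup X] [InnerProductSpace ℝ X] [FiniteDimensional ℝ X]
  {innE : ExteriorAlgebra ℝ X →ₗ[ℝ] ExteriorAlgebra ℝ X →ₗ[ℝ] ℝ}
  {lcontr : ExteriorAlgebra ℝ X →ₗ[ℝ] ExteriorAlgebra ℝ X →ₗ[ℝ] ExteriorAlgebra ℝ X}

theorem tgrade_le_finrank_osp (hinn : InnerOK innE) (hc : ContrOK innE lcontr)
    (M : ExteriorAlgebra ℝ X) : tgrade M ≤ Module.finrank ℝ (osp lcontr M) := by
  obtain ⟨b, T, hT, hTK⟩ := exists_orthonormalBasis_mem_submodule (ospKer lcontr M)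
  have hdim := (ospKer lcontr M).finrank_add_finrank_orthogonal
  refine csSup_le' fun p hp => ?_
  obtain ⟨s, rfl, hs⟩ := (gradeProj_ne_zero_iff b.toBasis p M).1 hp
  have hdisj : Disjoint s T := Finset.disjoint_left.2 fun i his hiT =>
    hs ((lcontr_ι_basis_eq_zero_iff b hinn hc i M).1 (hTK i hiT) s his)
  have hcard := (Finset.card_union_of_disjoint hdisj).symm.trans_le (s ∪ T).card_le_univ
  simp only [Fintype.card_fin] at hcard
  rw [osp]
  omega

variable {Ω : ExteriorAlgebra ℝ X}

theorem ospKer_lcontr_eq_isp (hinn : InnerOK innE) (hc : ContrOK innE lcontr)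
    (hΩmem : Ω ∈ ⋀[ℝ]^(Module.finrank ℝ X) X) (hΩunit : innE Ω Ω = 1)
    (M : ExteriorAlgebra ℝ X) : ospKer lcontr (lcontr M Ω) = isp M := by
  ext v
  by_cases hv : v = 0
  · simp [hv]
  obtain ⟨b, T, hT, hTv⟩ := exists_orthonormalBasis_mem_submodule (ℝ ∙ v)
  rw [finrank_span_singleton hv, Finset.card_eq_one] at hT
  obtain ⟨i, rfl⟩ := hT
  obtain ⟨a, ha⟩ := Submodule.mem_span_singleton.1 (hTv i (Finset.mem_singleton_self i))
  have ha0 : a ≠ 0 := by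
    rintro rfl
    exact b.orthonormal.ne_zero i (by rw [← ha, zero_smul])
  rw [← Submodule.smul_mem_iff _ ha0, ← Submodule.smul_mem_iff (isp M) ha0, ha, mem_isp,
    mem_ospKer, lcontr_ι_basis_eq_zero_iff b hinn hc, ← b.coe_toBasis, ι_basis_mul_eq_zero_iff]
  simp only [← not_ne_iff (b := (0 : ℝ)), basis_repr_lcontr_ne_zero_iff b hinn hc hΩmem hΩunit]
  exact ⟨fun h s hi => by simpa using h sᶜ (by simpa using hi),
    fun h s hi => h sᶜ (by simpa using hi)⟩

theorem finrank_isp_add_finrank_osp_lcontr (hinn : InnerOK innE) (hc : ContrOK innE lcontr)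
    (hΩmem : Ω ∈ ⋀[ℝ]^(Module.finrank ℝ X) X) (hΩunit : innE Ω Ω = 1)
    (M : ExteriorAlgebra ℝ X) :
    Module.finrank ℝ (isp M) + Module.finrank ℝ (osp lcontr (lcontr M Ω)) =
      Module.finrank ℝ X := by
  rw [osp, ospKer_lcontr_eq_isp hinn hc hΩmem hΩunit]
  exact (isp M).finrank_add_finrank_orthogonal

theorem gradeProj_lcontr_ne_zero_iff (hinn : InnerOK innE) (hc : ContrOK innE lcontr)
    (hΩmem : Ω ∈ ⋀[ℝ]^(Module.finrank ℝ X) X) (hΩunit : innE Ω Ω = 1)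
    (M : ExteriorAlgebra ℝ X) (q : ℕ) :
    gradeProj q (lcontr M Ω) ≠ 0 ↔
      q ≤ Module.finrank ℝ X ∧ gradeProj (Module.finrank ℝ X - q) M ≠ 0 := by
  let b := stdOrthonormalBasis ℝ X
  simp only [gradeProj_ne_zero_iff b.toBasis, basis_repr_lcontr_ne_zero_iff b hinn hc hΩmem hΩunit]
  constructor
  · rintro ⟨t, rfl, ht⟩
    exact ⟨by simpa using t.card_le_univ, tᶜ, by simp [Finset.card_compl], ht⟩
  · rintro ⟨hq, s, hs, hs'⟩
    exact ⟨sᶜ, by simp [Finset.card_compl, hs, Nat.sub_sub_self hq], by rwa [compl_compl]⟩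

theorem bgrade_add_tgrade_lcontr (hinn : InnerOK innE) (hc : ContrOK innE lcontr)
    (hΩmem : Ω ∈ ⋀[ℝ]^(Module.finrank ℝ X) X) (hΩunit : innE Ω Ω = 1)
    {M : ExteriorAlgebra ℝ X} (hM : M ≠ 0) :
    bgrade M + tgrade (lcontr M Ω) = Module.finrank ℝ X :=
  Nat.sInf_add_sSup_eq_of_mem_iff_sub_mem (nonempty_gradeProj_ne_zero hM)
    (fun _ hp => le_finrank_of_gradeProj_ne_zero hp)
    (gradeProj_lcontr_ne_zero_iff hinn hc hΩmem hΩunit M)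

end Duality

/-- Relations among the inner, bottom, top and outer grades,
and duality under the right Hodge dual `★M = M ⌟ Ω`. -/
theorem generalized_grades {X : Type*} [NormedAddCommGroup X]
    [InnerProductSpace ℝ X] [FiniteDimensional ℝ X]
    (innE : ExteriorAlgebra ℝ X →ₗ[ℝ] ExteriorAlgebra ℝ X →ₗ[ℝ] ℝ)
    (lcontr : ExteriorAlgebra ℝ X →ₗ[ℝ] ExteriorAlgebra ℝ X →ₗ[ℝ] ExteriorAlgebra ℝ X)
    (hinn : InnerOK innE) (hc : ContrOK innE lcontr)
    (Ω : ExteriorAlgebra ℝ X) (hΩmem : Ω ∈ ⋀[ℝ]^(Module.finrank ℝ X) X)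
    (hΩunit : innE Ω Ω = 1)
    (M : ExteriorAlgebra ℝ X) (hM0 : M ≠ 0) :
    -- (i)
    (Module.finrank ℝ (isp M) ≤ bgrade M ∧ bgrade M ≤ tgrade M ∧
      tgrade M ≤ Module.finrank ℝ (osp lcontr M)) ∧
    -- (ii)
    (Module.finrank ℝ (isp M) + Module.finrank ℝ (osp lcontr (lcontr M Ω)) =
        Module.finrank ℝ X ∧
      bgrade M + tgrade (lcontr M Ω) = Module.finrank ℝ X) := by
  have hin_out := finrank_isp_add_finrank_osp_lcontr hinn hc hΩmem hΩunit M
  have hbot_top := bgrade_add_tgrade_lcontr hinn hc hΩmem hΩunit hM0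
  -- `in M ≤ bot M` is the dual of `top ★M ≤ out ★M`.
  have hdual := tgrade_le_finrank_osp hinn hc (lcontr M Ω)
  exact ⟨⟨by omega, bgrade_le_tgrade hM0, tgrade_le_finrank_osp hinn hc M⟩, hin_out, hbot_top⟩
end
end
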